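/- For s ≥ 1, the number of ways to place exactly 2 non-overlapping s×s squares in a 2s×2s square is T(2s,2s,s,2) = 2s(s+2). -/
import Mathlib


/-- The set of cells covered by an `s×s` square whose corner is at `p`. -/
def squareCells (s : ℕ) (p : ℕ × ℕ) : Finset (ℕ × ℕ) :=
  Finset.Ico p.1 (p.1 + s) ×ˢ Finset.Ico p.2 (p.2 + s)

/-- `T n m s k`: the number of ways to place `k` pairwise non-overlapping axis-aligned
`s×s` squares at integer positions inside an `n×m` rectangle (the remaining cells
being covered by `1×1` squares). -/
noncomputable def T (n m s k : ℕ) : ℕ :=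
  Set.ncard {S : Finset (ℕ × ℕ) |
    S.card = k ∧
    (∀ p ∈ S, p.1 + s ≤ n ∧ p.2 + s ≤ m) ∧
    (S : Set (ℕ × ℕ)).Pairwise fun p q => Disjoint (squareCells s p) (squareCells s q)}

/-- `Ttot n m s`: total number of tilings of the `n×m` rectangle by `1×1` and `s×s`
squares (summing over all possible numbers of `s×s` squares). -/
noncomputable def Ttot (n m s : ℕ) : ℕ := ∑ k ∈ Finset.range (n * m + 1), T n m s k

lemma mem_squareCells (s : ℕ) (p r : ℕ × ℕ) :
    r ∈ squareCells s p ↔ (p.1 ≤ r.1 ∧ r.1 < p.1 + s) ∧ (p.2 ≤ r.2 ∧ r.2 < p.2 + s) := by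
  simp [squareCells, Finset.mem_product, Finset.mem_Ico]

lemma disj_iff (s : ℕ) (hs : 1 ≤ s) (p q : ℕ × ℕ)
    (hp1 : p.1 ≤ s) (hp2 : p.2 ≤ s) (hq1 : q.1 ≤ s) (hq2 : q.2 ≤ s) :
    Disjoint (squareCells s p) (squareCells s q) ↔
      (p.1 = 0 ∧ q.1 = s) ∨ (p.1 = s ∧ q.1 = 0) ∨ (p.2 = 0 ∧ q.2 = s) ∨ (p.2 = s ∧ q.2 = 0) := by
  constructor
  · intro h
    by_contra hc
    push_neg at hc
    have h1 : (max p.1 q.1, max p.2 q.2) ∉ squareCells s q :=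
      Finset.disjoint_left.mp h (by rw [mem_squareCells]; simp only; omega)
    rw [mem_squareCells] at h1
    simp only at h1
    omega
  · intro h
    rw [Finset.disjoint_left]
    intro r hA hB
    rw [mem_squareCells] at hA hB
    omega

theorem stmt_14 (s : ℕ) (hs : 1 ≤ s) :
    T (2 * s) (2 * s) s 2 = 2 * s * (s + 2) := by
  classical
  set f1 : ℕ × ℕ → Finset (ℕ × ℕ) := fun ab => {(0, ab.1), (s, ab.2)} with hf1
  set f2 : ℕ × ℕ → Finset (ℕ × ℕ) := fun ab => {(ab.1, 0), (ab.2, s)} with hf2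
  set R : Finset (ℕ × ℕ) := Finset.range (s+1) ×ˢ Finset.range (s+1) with hR
  set F1 := R.image f1 with hF1
  set F2 := R.image f2 with hF2
  have hmemR : ∀ ab : ℕ × ℕ, ab ∈ R ↔ ab.1 ≤ s ∧ ab.2 ≤ s := by
    intro ab; simp [hR, Finset.mem_product, Nat.lt_succ_iff]
  -- the big set equality
  have hset : {S : Finset (ℕ × ℕ) |
      S.card = 2 ∧
      (∀ p ∈ S, p.1 + s ≤ 2*s ∧ p.2 + s ≤ 2*s) ∧
      (S : Set (ℕ × ℕ)).Pairwise fun p q => Disjoint (squareCells s p) (squareCells s q)}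
      = ↑(F1 ∪ F2) := by
    ext S
    simp only [Set.mem_setOf_eq, Finset.coe_union, Set.mem_union, Finset.mem_coe,
      hF1, hF2, Finset.mem_image]
    constructor
    · rintro ⟨hcard, hbound, hpair⟩
      obtain ⟨p, q, hpq, rfl⟩ := Finset.card_eq_two.mp hcard
      have hpmem : p ∈ ({p, q} : Finset (ℕ × ℕ)) := by simp
      have hqmem : q ∈ ({p, q} : Finset (ℕ × ℕ)) := by simp
      obtain ⟨hp1, hp2⟩ := hbound p hpmem
      obtain ⟨hq1, hq2⟩ := hbound q hqmem
      have hd : Disjoint (squareCells s p) (squareCells s q) := by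
        refine hpair ?_ ?_ hpq <;> simp
      rw [disj_iff s hs p q (by omega) (by omega) (by omega) (by omega)] at hd
      obtain ⟨a, b⟩ := p
      obtain ⟨c, d⟩ := q
      simp only at hd hp1 hp2 hq1 hq2
      rcases hd with ⟨h1, h2⟩ | ⟨h1, h2⟩ | ⟨h1, h2⟩ | ⟨h1, h2⟩
      · exact Or.inl ⟨(b, d), by rw [hmemR]; exact ⟨by omega, by omega⟩, by subst h1 h2; rfl⟩
      · exact Or.inl ⟨(d, b), by rw [hmemR]; exact ⟨by omega, by omega⟩,
          by subst h1 h2; rw [Finset.pair_comm]⟩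
      · exact Or.inr ⟨(a, c), by rw [hmemR]; exact ⟨by omega, by omega⟩, by subst h1 h2; rfl⟩
      · exact Or.inr ⟨(c, a), by rw [hmemR]; exact ⟨by omega, by omega⟩,
          by subst h1 h2; rw [Finset.pair_comm]⟩
    · rintro (⟨⟨a, b⟩, hab, rfl⟩ | ⟨⟨a, b⟩, hab, rfl⟩) <;>
        rw [hmemR] at hab <;> simp only at hab
      · refine ⟨Finset.card_pair (by simp; omega), ?_, ?_⟩
        · intro p hp
          simp only [hf1, Finset.mem_insert, Finset.mem_singleton] at hp
          rcases hp with rfl | rfl <;> simp <;> omega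
        · simp only [hf1]
          rw [Finset.coe_insert, Finset.coe_singleton, Set.pairwise_pair]
          intro _
          constructor
          · rw [disj_iff s hs _ _ (by simp) (by simp; omega) (by simp) (by simp; omega)]
            simp
          · rw [disj_iff s hs _ _ (by simp) (by simp; omega) (by simp) (by simp; omega)]
            simp
      · refine ⟨Finset.card_pair (by simp; omega), ?_, ?_⟩
        · intro p hp
          simp only [hf2, Finset.mem_insert, Finset.mem_singleton] at hp
          rcases hp with rfl | rfl <;> simp <;> omega
        · simp only [hf2]
          rw [Finset.coe_insert, Finset.coe_singleton, Set.pairwise_pair]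
          intro _
          constructor
          · rw [disj_iff s hs _ _ (by simp; omega) (by simp) (by simp; omega) (by simp)]
            simp
          · rw [disj_iff s hs _ _ (by simp; omega) (by simp) (by simp; omega) (by simp)]
            simp
  -- injectivity
  have hne0s : (0 : ℕ) ≠ s := by omega
  have hinj1 : Function.Injective f1 := by
    rintro ⟨a, b⟩ ⟨a', b'⟩ h
    simp only [hf1] at h
    have h1 : ((0 : ℕ), a) ∈ ({((0:ℕ), a'), (s, b')} : Finset (ℕ × ℕ)) := by
      rw [← h]; simp
    have h2 : ((s : ℕ), b) ∈ ({((0:ℕ), a'), (s, b')} : Finset (ℕ × ℕ)) := by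
      rw [← h]; simp
    simp only [Finset.mem_insert, Finset.mem_singleton, Prod.mk.injEq] at h1 h2
    have : a = a' ∧ b = b' := by omega
    simp [this.1, this.2]
  have hinj2 : Function.Injective f2 := by
    rintro ⟨a, b⟩ ⟨a', b'⟩ h
    simp only [hf2] at h
    have h1 : (a, (0:ℕ)) ∈ ({(a', (0:ℕ)), (b', s)} : Finset (ℕ × ℕ)) := by
      rw [← h]; simp
    have h2 : (b, s) ∈ ({(a', (0:ℕ)), (b', s)} : Finset (ℕ × ℕ)) := by
      rw [← h]; simp
    simp only [Finset.mem_insert, Finset.mem_singleton, Prod.mk.injEq] at h1 h2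
    have : a = a' ∧ b = b' := by omega
    simp [this.1, this.2]
  have hcard1 : F1.card = (s+1) * (s+1) := by
    rw [hF1, Finset.card_image_of_injective _ hinj1, hR, Finset.card_product,
      Finset.card_range]
  have hcard2 : F2.card = (s+1) * (s+1) := by
    rw [hF2, Finset.card_image_of_injective _ hinj2, hR, Finset.card_product,
      Finset.card_range]
  -- intersection
  have hinter : F1 ∩ F2 = {({((0:ℕ),(0:ℕ)), (s,s)} : Finset (ℕ × ℕ)),
      ({((0:ℕ),s), (s,(0:ℕ))} : Finset (ℕ × ℕ))} := by
    ext S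
    simp only [Finset.mem_inter, hF1, hF2, Finset.mem_image, Finset.mem_insert,
      Finset.mem_singleton]
    constructor
    · rintro ⟨⟨⟨a, b⟩, hab, rfl⟩, ⟨⟨c, d⟩, hcd, h2⟩⟩
      simp only [hf1, hf2] at h2 ⊢
      have e1 : ((0:ℕ), a) ∈ ({(c, (0:ℕ)), (d, s)} : Finset (ℕ × ℕ)) := by rw [h2]; simp
      have e2 : ((s:ℕ), b) ∈ ({(c, (0:ℕ)), (d, s)} : Finset (ℕ × ℕ)) := by rw [h2]; simp
      simp only [Finset.mem_insert, Finset.mem_singleton, Prod.mk.injEq] at e1 e2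
      have : (a = 0 ∧ b = s) ∨ (a = s ∧ b = 0) := by omega
      rcases this with ⟨rfl, rfl⟩ | ⟨rfl, rfl⟩
      · exact Or.inl rfl
      · exact Or.inr rfl
    · rintro (rfl | rfl)
      · exact ⟨⟨(0, s), by rw [hmemR]; simp, rfl⟩, ⟨(0, s), by rw [hmemR]; simp, rfl⟩⟩
      · exact ⟨⟨(s, 0), by rw [hmemR]; simp, rfl⟩,
          ⟨(s, 0), by rw [hmemR]; simp, by simp [hf2, Finset.pair_comm]⟩⟩
  have hScard : (F1 ∩ F2).card = 2 := by
    rw [hinter]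
    refine Finset.card_pair ?_
    intro h
    have : ((0:ℕ),(0:ℕ)) ∈ ({((0:ℕ),s), (s,(0:ℕ))} : Finset (ℕ × ℕ)) := by rw [← h]; simp
    simp only [Finset.mem_insert, Finset.mem_singleton, Prod.mk.injEq] at this
    omega
  have hunion := Finset.card_union_add_card_inter F1 F2
  rw [T, hset, Set.ncard_coe_finset]
  obtain ⟨n, hn⟩ : ∃ n, n = (s+1)*(s+1) := ⟨_, rfl⟩
  obtain ⟨m, hm⟩ : ∃ m, m = s*(s+2) := ⟨_, rfl⟩
  have e : n + n = 2*m + 2 := by rw [hn, hm]; ring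
  have goal' : 2*s*(s+2) = 2*m := by rw [hm]; ring
  rw [goal']
  rw [← hn] at hcard1 hcard2
  omega
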